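/- arXiv:math/0609410 — 2 statements merged into one kernel-verified Lean document; each statement's English description precedes it below -/
import Mathlib

section
/- Let p be an odd prime, K = ℚ(ζ) the p-th cyclotomic field, π the prime above p, and A ∈ O_K a semi-primary number (A ≡ a mod π² for some integer a coprime to p) with σ(A) = A^μ · α^p for the automorphism σ: ζ ↦ ζ^v (v a primitive root mod p), μ coprime to p, α ∈ K. Suppose S = K(ω) where ω^p = A^{p-1}. Then among the p extensions σ_{(w)} of σ to S defined by σ_{(w)}(ω) = ω^μ · α^{p-1} · ζ^w (w = 0,...,p-1), there is exactly one w such that α^{p-1}·ζ^w is semi-primary. -/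
open NumberField

/-!
Write `λ = ζ - 1`. Every element of `ℤ[ζ]` is congruent to a rational integer mod `λ`, so
`α ^ (p - 1) ≡ c + f λ (mod λ²)` with `c f : ℤ`. Since `σ` preserves `(λ)`, `A` is prime to `λ` and
`σ A = A ^ μ * α ^ p`, also `α` is prime to `λ`, i.e. `p ∤ c`. From `ζ ^ w = (1 + λ) ^ w ≡ 1 + w λ`
we get `α ^ (p - 1) ζ ^ w ≡ c + (f + c w) λ`; as `λ² ∣ p` and `(λ) ∩ ℤ = pℤ`, this is congruent to
a rational integer mod `λ²` exactly when `p ∣ f + c w`, which has a unique solution `w` mod `p`.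
-/

section SubOneExpansion

variable {R : Type*} [CommRing R]

theorem sq_sub_one_dvd_pow_sub (x : R) (n : ℕ) :
    (x - 1) ^ 2 ∣ x ^ n - (1 + n * (x - 1)) := by
  induction n with
  | zero => simp
  | succ n ih =>
    obtain ⟨u, hu⟩ := ih
    exact ⟨x * u + n, by push_cast; linear_combination x * hu⟩

theorem sq_sub_one_dvd_mul_pow_sub {ζ x c f : R} (hx : (ζ - 1) ^ 2 ∣ x - (c + f * (ζ - 1)))
    (w : ℕ) : (ζ - 1) ^ 2 ∣ x * ζ ^ w - (c + (f + c * w) * (ζ - 1)) := by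
  obtain ⟨u, hu⟩ := hx
  obtain ⟨v, hv⟩ := sq_sub_one_dvd_pow_sub ζ w
  exact ⟨u * ζ ^ w + (c + f * (ζ - 1)) * v + f * w,
    by linear_combination ζ ^ w * hu + (c + f * (ζ - 1)) * hv⟩

theorem sub_one_dvd_sub_intCast_of_adjoin_eq_top {ζ : R} (h : Algebra.adjoin ℤ {ζ} = ⊤) (x : R) :
    ∃ n : ℤ, ζ - 1 ∣ x - n := by
  have hx : x ∈ Algebra.adjoin ℤ {ζ} := h ▸ Algebra.mem_top
  obtain ⟨g, rfl⟩ := (Algebra.adjoin_singleton_eq_range_aeval ℤ ζ ▸ hx :)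
  refine ⟨g.eval 1, ?_⟩
  simpa [Polynomial.aeval_def, Polynomial.eval₂_eq_eval_map, Polynomial.eval_one_map] using
    Polynomial.sub_dvd_eval_sub ζ 1 (g.map (Int.castRingHom R))

theorem exists_sq_dvd_sub_intCast_add_mul {t : R} (h : ∀ x : R, ∃ n : ℤ, t ∣ x - n) (x : R) :
    ∃ c f : ℤ, t ^ 2 ∣ x - (c + f * t) := by
  obtain ⟨c, d, hd⟩ := h x
  obtain ⟨f, e, he⟩ := h d
  exact ⟨c, f, e, by linear_combination hd + t * he⟩

end SubOneExpansion

section SemiPrimary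

variable {R : Type*} [CommRing R] {t : R} {p : ℕ}

theorem exists_sq_dvd_sub_intCast_iff [IsDomain R] (ht : t ≠ 0)
    (hdvd_intCast : ∀ m : ℤ, t ∣ (m : R) ↔ (p : ℤ) ∣ m) (htp : t ^ 2 ∣ (p : R))
    {x : R} {c f : ℤ}
    (hc : ¬ (p : ℤ) ∣ c) (hx : t ^ 2 ∣ x - (c + f * t)) :
    (∃ c' : ℤ, ¬ (p : ℤ) ∣ c' ∧ t ^ 2 ∣ x - c') ↔ (p : ℤ) ∣ f := by
  have hsq : ∀ m : ℤ, (p : ℤ) ∣ m → t ^ 2 ∣ (m : R) := by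
    rintro _ ⟨k, rfl⟩
    exact htp.mul_right k |>.trans (by push_cast; rfl)
  constructor
  · rintro ⟨c', -, hc'⟩
    have hdiff : t ^ 2 ∣ ((c - c' : ℤ) : R) + f * t := by
      convert dvd_sub hc' hx using 1
      push_cast
      ring
    have hcc' : (p : ℤ) ∣ c - c' := (hdvd_intCast _).1 <|
      (dvd_add_left (dvd_mul_left t f)).1 ((dvd_pow_self t two_ne_zero).trans hdiff)
    have hft : t ^ 2 ∣ f * t := (dvd_add_right (hsq _ hcc')).1 hdiff
    rw [sq, mul_comm (f : R)] at hft
    exact (hdvd_intCast f).1 ((mul_dvd_mul_iff_left ht).1 hft)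
  · intro hf
    refine ⟨c, hc, ?_⟩
    have hft : t ^ 2 ∣ f * t := by
      rw [sq]
      exact mul_dvd_mul_right ((hdvd_intCast f).2 hf) t
    convert dvd_add hx hft using 1
    ring

theorem not_dvd_of_map_eq_pow_mul_pow (σ : R →+* R) (hσt : t ∣ σ t) {A α : R} {a : ℤ}
    (hA : t ∣ A - a) (ha : ¬ t ∣ (a : R)) {μ : ℕ} (hp : p ≠ 0) (hσA : σ A = A ^ μ * α ^ p) :
    ¬ t ∣ α := by
  intro hα
  have hσA' : t ∣ σ A - a := by simpa using hσt.trans (map_dvd σ hA)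
  have htσA : t ∣ σ A := hσA ▸ (dvd_pow hα hp).mul_left _
  exact ha (by simpa using dvd_sub htσA hσA')

end SemiPrimary

theorem existsUnique_fin_dvd_add_mul {p : ℕ} [Fact p.Prime] {c : ℤ} (hc : ¬ (p : ℤ) ∣ c)
    (f : ℤ) : ∃! w : Fin p, (p : ℤ) ∣ f + c * w := by
  have hc' : (c : ZMod p) ≠ 0 := by rwa [Ne, ZMod.intCast_zmod_eq_zero_iff_dvd]
  simp_rw [← ZMod.intCast_zmod_eq_zero_iff_dvd]
  push_cast
  refine ⟨⟨(-f / c : ZMod p).val, ZMod.val_lt _⟩, ?_, fun w hw => Fin.ext ?_⟩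
  · simp only [ZMod.natCast_val, ZMod.cast_id', id]
    field_simp
    ring
  · have hw' : ((w : ℕ) : ZMod p) = -f / c := by
      field_simp
      linear_combination hw
    simp [← hw', ZMod.val_natCast_of_lt w.isLt]

theorem stmt7_general (p : ℕ) [hp : Fact p.Prime] (hodd : Odd p)
    (K : Type*) [Field K] [NumberField K]
    [IsCyclotomicExtension {p} ℚ K]
    (ζ : 𝓞 K) (hζ : IsPrimitiveRoot ζ p)
    (π : Ideal (𝓞 K)) (hπ : π = Ideal.span {ζ - 1})
    (v : ℕ)
    (μ : ℕ)
    (A α : 𝓞 K)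
    (hAsp : ∃ a : ℤ, ¬ (p : ℤ) ∣ a ∧ A - (a : 𝓞 K) ∈ π ^ 2)
    (σ : 𝓞 K ≃+* 𝓞 K) (hσζ : σ ζ = ζ ^ v)
    (hσA : σ A = A ^ μ * α ^ p) :
    ∃! w : Fin p, ∃ c : ℤ, ¬ (p : ℤ) ∣ c ∧
      α ^ (p - 1) * ζ ^ (w : ℕ) - (c : 𝓞 K) ∈ π ^ 2 := by
  have hη : IsPrimitiveRoot (ζ : K) p := hζ.map_of_injective RingOfIntegers.coe_injective
  have hηζ : hη.toInteger = ζ := RingOfIntegers.ext hη.coe_toInteger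
  have hprime : Prime (ζ - 1) := hηζ ▸ hη.zeta_sub_one_prime'
  have hdvd_intCast (m : ℤ) : ζ - 1 ∣ (m : 𝓞 K) ↔ (p : ℤ) ∣ m :=
    hηζ ▸ IsCyclotomicExtension.Rat.zeta_sub_one_dvd_intCast_iff' p hη
  have hsq_dvd_p : (ζ - 1) ^ 2 ∣ (p : 𝓞 K) := by
    have : 2 ≤ p - 1 := by have := hp.out.two_le; obtain ⟨k, hk⟩ := hodd; omega
    exact (pow_dvd_pow _ this).trans
      (hηζ ▸ IsCyclotomicExtension.Rat.associated_zeta_sub_one_pow_prime p hη).dvd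
  have hmod_intCast (x : 𝓞 K) : ∃ n : ℤ, ζ - 1 ∣ x - n :=
    sub_one_dvd_sub_intCast_of_adjoin_eq_top
      (hηζ ▸ IsCyclotomicExtension.Rat.adjoin_singleton_eq_top hη) x
  subst hπ
  simp only [Ideal.span_singleton_pow, Ideal.mem_span_singleton] at hAsp ⊢
  obtain ⟨a, ha, hA⟩ := hAsp
  have hα : ¬ ζ - 1 ∣ α :=
    not_dvd_of_map_eq_pow_mul_pow σ.toRingHom
      (by simpa [hσζ] using sub_one_dvd_pow_sub_one ζ v)
      ((dvd_pow_self _ two_ne_zero).trans hA) (mt (hdvd_intCast a).1 ha) hp.out.ne_zero hσA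
  obtain ⟨c, f, hcf⟩ := exists_sq_dvd_sub_intCast_add_mul hmod_intCast (α ^ (p - 1))
  have hβ : ζ - 1 ∣ α ^ (p - 1) - c := by
    convert dvd_add ((dvd_pow_self _ two_ne_zero).trans hcf) (dvd_mul_left (ζ - 1) (f : 𝓞 K))
      using 1
    ring
  have hc : ¬ (p : ℤ) ∣ c := fun hpc =>
    hα <| hprime.dvd_of_dvd_pow (n := p - 1) <| by
      simpa using dvd_add hβ ((hdvd_intCast c).2 hpc)
  refine (existsUnique_congr fun w => ?_).2 (existsUnique_fin_dvd_add_mul hc f)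
  refine exists_sq_dvd_sub_intCast_iff hprime.ne_zero hdvd_intCast hsq_dvd_p hc ?_
  simpa using sq_sub_one_dvd_mul_pow_sub hcf w

theorem stmt7 (p : ℕ) [hp : Fact p.Prime] (hodd : Odd p)
    (K : Type*) [Field K] [NumberField K]
    [IsCyclotomicExtension {p} ℚ K]
    (ζ : 𝓞 K) (hζ : IsPrimitiveRoot ζ p)
    (π : Ideal (𝓞 K)) (hπ : π = Ideal.span {ζ - 1})
    (v : ℕ) (hv : orderOf (v : ZMod p) = p - 1)
    (μ : ℕ) (hμ : ¬ p ∣ μ)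
    (A α : 𝓞 K)
    (hAsp : ∃ a : ℤ, ¬ (p : ℤ) ∣ a ∧ A - (a : 𝓞 K) ∈ π ^ 2)
    (σ : 𝓞 K ≃+* 𝓞 K) (hσζ : σ ζ = ζ ^ v)
    (hσA : σ A = A ^ μ * α ^ p)
    (S : Type*) [Field S] [Algebra K S]
    (ω : S) (hω : ω ^ p = algebraMap K S ((A ^ (p - 1) : 𝓞 K) : K)) :
    ∃! w : Fin p, ∃ c : ℤ, ¬ (p : ℤ) ∣ c ∧
      α ^ (p - 1) * ζ ^ (w : ℕ) - (c : 𝓞 K) ∈ π ^ 2 :=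
  stmt7_general p (hp := hp) hodd K ζ hζ π hπ v μ A α hAsp σ hσζ hσA
end

section
/- Let p be an odd prime, K = ℚ(ζ), S = K(ω) a cyclic degree-p Kummer extension of K, θ: ω ↦ ωζ the generator of Gal(S/K), and π₀ a prime ideal of O_S above the prime π = (ζ-1)O_K such that π₀² divides ω - 1 and π_n := θ^n(π₀) exactly divides ω - 1 (exactly to the first power) for n = 1,...,p-1. Let σ_μ ∈ Gal(S/ℚ) restrict to ζ ↦ ζ^v on K and satisfy σ_μ(ω) ≡ ω^μ (mod π²) with μ coprime to p. Then σ_μ(π₀) = π₀. -/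
/-!
The ideal σ(π₀) is a prime containing ζ - 1, so it is one of the π_n. If it were π_n with
n ≥ 1, applying σ to ω ≡ 1 (mod π₀²) would give ω^μ ≡ σ(ω) ≡ 1 (mod π_n²). As ω - 1 lies in π_n
exactly once, π_n would contain 1 + ω + ⋯ + ω^(μ-1) ≡ μ (mod π_n); but π_n also contains p,
which is coprime to μ.
-/

open NumberField

theorem Nat.coprime_of_orderOf_natCast_ne_zero {v n : ℕ} (hv : orderOf (v : ZMod n) ≠ 0) :
    v.Coprime n :=
  (ZMod.isUnit_iff_coprime v n).mp (orderOf_ne_zero_iff.mp hv).isUnit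

theorem IsPrimitiveRoot.sub_one_mem_of_pow_sub_one_mem {A : Type*} [CommRing A] [IsDomain A]
    {ζ : A} {n v : ℕ} (hζ : IsPrimitiveRoot ζ n) (hv : orderOf (v : ZMod n) ≠ 0) {I : Ideal A}
    (hI : ζ ^ v - 1 ∈ I) : ζ - 1 ∈ I :=
  I.mem_of_dvd (hζ.associated_sub_one_pow_sub_one_of_coprime
    (Nat.coprime_of_orderOf_natCast_ne_zero hv)).symm.dvd hI

namespace Ideal

variable {R : Type*} [CommRing R]

theorem geom_sum_sub_natCast_mem {P : Ideal R} {ω : R} (hω : ω - 1 ∈ P) (μ : ℕ) :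
    ∑ j ∈ Finset.range μ, ω ^ j - μ ∈ P := by
  have hω' : Quotient.mk P ω = 1 := by
    rw [← map_one (Quotient.mk P), Quotient.eq]
    exact hω
  rw [← Quotient.eq]
  simp [hω']

theorem IsMaximal.mem_of_mul_mem_sq {P : Ideal R} (hP : P.IsMaximal) {a b : R}
    (hab : a * b ∈ P ^ 2) (hb : b ∉ P ^ 2) : a ∈ P := by
  have hrad : radical (P ^ 2) = P := by rw [radical_pow P two_ne_zero, hP.isPrime.radical]
  have hprimary : (P ^ 2).IsPrimary := isPrimary_of_isMaximal_radical (by rwa [hrad])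
  rw [mul_comm] at hab
  simpa [hrad, hb] using (isPrimary_iff.mp hprimary).2 hab

theorem natCast_mem_of_pow_sub_one_mem_sq {P : Ideal R} (hP : P.IsMaximal) {ω : R}
    (hω : ω - 1 ∈ P) (hω2 : ω - 1 ∉ P ^ 2) {μ : ℕ} (hμ : ω ^ μ - 1 ∈ P ^ 2) : (μ : R) ∈ P := by
  have hgeom : ∑ j ∈ Finset.range μ, ω ^ j ∈ P :=
    hP.mem_of_mul_mem_sq (by rwa [geom_sum_mul]) hω2
  simpa using P.sub_mem hgeom (geom_sum_sub_natCast_mem hω μ)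

theorem eq_top_of_natCast_mem_of_coprime {I : Ideal R} {m n : ℕ} (hmn : m.Coprime n)
    (hm : (m : R) ∈ I) (hn : (n : R) ∈ I) : I = ⊤ := by
  obtain ⟨a, b, hab⟩ := (Nat.isCoprime_iff_coprime.mpr hmn).map (Int.castRingHom R)
  rw [eq_top_iff_one, ← hab]
  simp only [eq_intCast, Int.cast_natCast]
  exact I.add_mem (I.mul_mem_left _ hm) (I.mul_mem_left _ hn)

theorem IsPrime.exists_eq_of_prod_le {ι : Type*} {s : Finset ι} {Q : ι → Ideal R}
    (hQ : ∀ i, (Q i).IsMaximal) {P : Ideal R} (hP : P.IsPrime) (hle : ∏ i ∈ s, Q i ≤ P) :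
    ∃ i ∈ s, Q i = P := by
  obtain ⟨i, hi, hiP⟩ := hP.prod_le.mp hle
  exact ⟨i, hi, (hQ i).eq_of_le hP.ne_top hiP⟩

end Ideal

theorem stmt12_general (p : ℕ) (hp : p.Prime)
    (S : Type*) [Field S] [NumberField S]
    (ζ ω : 𝓞 S) (hζ : IsPrimitiveRoot ζ p)
    (θ σ : 𝓞 S ≃+* 𝓞 S)
    (v μ : ℕ) (hv : orderOf (v : ZMod p) = p - 1) (hμ : ¬ p ∣ μ)
    (hσζ : σ ζ = ζ ^ v)
    (π₀ : Ideal (𝓞 S)) (hπ₀ : π₀.IsPrime) (hπ₀p : ζ - 1 ∈ π₀)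
    (πn : ℕ → Ideal (𝓞 S))
    (hπn : ∀ n, πn n = Ideal.map ((θ ^ n : 𝓞 S ≃+* 𝓞 S) : 𝓞 S →+* 𝓞 S) π₀)
    (hsplit : (Ideal.span {ζ - 1} : Ideal (𝓞 S)) = ∏ n ∈ Finset.range p, πn n)
    (hω0 : ω - 1 ∈ π₀ ^ 2)
    (hωn : ∀ n, 1 ≤ n → n ≤ p - 1 → ω - 1 ∈ πn n ∧ ω - 1 ∉ (πn n) ^ 2)
    (hσω : σ ω - ω ^ μ ∈ (Ideal.span {ζ - 1} : Ideal (𝓞 S)) ^ 2) :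
    Ideal.map (σ : 𝓞 S →+* 𝓞 S) π₀ = π₀ := by
  set J := Ideal.map (σ : 𝓞 S →+* 𝓞 S) π₀
  have hπ₀max : π₀.IsMaximal :=
    hπ₀.isMaximal ((Submodule.ne_bot_iff _).mpr ⟨_, hπ₀p, sub_ne_zero.mpr (hζ.ne_one hp.one_lt)⟩)
  have hπnmax (n : ℕ) : (πn n).IsMaximal := hπn n ▸ hπ₀max.map_bijective _ (θ ^ n).bijective
  have hJmax : J.IsMaximal := hπ₀max.map_bijective _ σ.bijective
  have hζJ : ζ - 1 ∈ J :=
    hζ.sub_one_mem_of_pow_sub_one_mem (hv ▸ Nat.sub_ne_zero_of_lt hp.one_lt) <| by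
      simpa [hσζ] using Ideal.mem_map_of_mem (σ : 𝓞 S →+* 𝓞 S) hπ₀p
  obtain ⟨n, hn, hJn⟩ := hJmax.isPrime.exists_eq_of_prod_le hπnmax
    (hsplit ▸ (Ideal.span_singleton_le_iff_mem _).mpr hζJ)
  obtain rfl | hn0 := Nat.eq_zero_or_pos n
  · rw [← hJn, hπn, pow_zero]
    exact Ideal.map_id π₀
  obtain ⟨hω1, hω2⟩ := hJn ▸ hωn n hn0 (Nat.le_sub_one_of_lt (Finset.mem_range.mp hn))
  have hωμ : ω ^ μ - 1 ∈ J ^ 2 := by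
    have hσω1 : σ ω - 1 ∈ J ^ 2 := by
      simpa [J, ← Ideal.map_pow] using Ideal.mem_map_of_mem (σ : 𝓞 S →+* 𝓞 S) hω0
    have hσωμ : σ ω - ω ^ μ ∈ J ^ 2 :=
      Ideal.pow_right_mono ((Ideal.span_singleton_le_iff_mem _).mpr hζJ) 2 hσω
    simpa using sub_mem hσω1 hσωμ
  exact absurd (Ideal.eq_top_of_natCast_mem_of_coprime (hp.coprime_iff_not_dvd.mpr hμ)
    (J.mem_of_dvd (hζ.sub_one_dvd_natCast hp.one_lt) hζJ)
    (Ideal.natCast_mem_of_pow_sub_one_mem_sq hJmax hω1 hω2 hωμ)) hJmax.ne_top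

theorem stmt12 (p : ℕ) (hp : p.Prime) (hodd : Odd p)
    (S : Type*) [Field S] [NumberField S]
    (ζ ω : 𝓞 S) (hζ : IsPrimitiveRoot ζ p)
    (θ σ : 𝓞 S ≃+* 𝓞 S)
    (hθζ : θ ζ = ζ) (hθω : θ ω = ω * ζ)
    (v μ : ℕ) (hv : orderOf (v : ZMod p) = p - 1) (hμ : ¬ p ∣ μ)
    (hσζ : σ ζ = ζ ^ v)
    (π₀ : Ideal (𝓞 S)) (hπ₀ : π₀.IsPrime) (hπ₀p : ζ - 1 ∈ π₀)
    (πn : ℕ → Ideal (𝓞 S))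
    (hπn : ∀ n, πn n = Ideal.map ((θ ^ n : 𝓞 S ≃+* 𝓞 S) : 𝓞 S →+* 𝓞 S) π₀)
    (hsplit : (Ideal.span {ζ - 1} : Ideal (𝓞 S)) = ∏ n ∈ Finset.range p, πn n)
    (hω0 : ω - 1 ∈ π₀ ^ 2)
    (hωn : ∀ n, 1 ≤ n → n ≤ p - 1 → ω - 1 ∈ πn n ∧ ω - 1 ∉ (πn n) ^ 2)
    (hσω : σ ω - ω ^ μ ∈ (Ideal.span {ζ - 1} : Ideal (𝓞 S)) ^ 2) :
    Ideal.map (σ : 𝓞 S →+* 𝓞 S) π₀ = π₀ :=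
  stmt12_general p hp S ζ ω hζ θ σ v μ hv hμ hσζ π₀ hπ₀ hπ₀p πn hπn hsplit hω0 hωn hσω
end
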